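/- Let H₁, …, H_d be d×d complex Hadamard matrices that are pairwise unbiased. Then for every γ ∈ ℤ^d, Σ_{r ≠ t} F(γ + π_r − π_t) − Σ_{r ≠ t} G(γ + π_r − π_t) = 0, where the sums range over all ordered pairs (r,t) with 1 ≤ r, t ≤ d and r ≠ t. -/

import Mathlib

open Finset

/-- G(γ) = (1/d!) Σ_σ Σ_j |g_j^σ(γ)|², where
g_j^σ(γ) = Σ_k Π_i (H_j)_{ik}^{γ_{σ(i)}}. -/
noncomputable def bigG (d : ℕ) (Hs : Fin d → Matrix (Fin d) (Fin d) ℂ) (γ : Fin d → ℤ) : ℝ :=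
  (1 / (Nat.factorial d : ℝ)) * ∑ σ : Equiv.Perm (Fin d), ∑ j : Fin d,
    ‖∑ k : Fin d, ∏ i : Fin d, (Hs j) i k ^ γ (σ i)‖ ^ 2

/-- F(γ) = (1/d!) Σ_σ |Σ_j g_j^σ(γ)|², where
g_j^σ(γ) = Σ_k Π_i (H_j)_{ik}^{γ_{σ(i)}}. -/
noncomputable def bigF (d : ℕ) (Hs : Fin d → Matrix (Fin d) (Fin d) ℂ) (γ : Fin d → ℤ) : ℝ :=
  (1 / (Nat.factorial d : ℝ)) * ∑ σ : Equiv.Perm (Fin d),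
    ‖∑ j : Fin d, ∑ k : Fin d, ∏ i : Fin d, (Hs j) i k ^ γ (σ i)‖ ^ 2

/-!
Fix `σ`. Since `|∑ⱼ gⱼ|² - ∑ⱼ |gⱼ|²` is the real part of `∑_{j ≠ j'} gⱼ conj g_{j'}`, and `σ`
can be absorbed into a permutation of the rows of the matrices, it suffices to show that for two
unbiased matrices `A`, `B` with unimodular entries,
`∑_{r ≠ t} g_A(γ + π_r - π_t) conj g_B(γ + π_r - π_t) = 0`, where `g_A(δ) = ∑ₖ ∏ᵢ A_{ik}^{δ_i}`.
Unimodularity turns the shift by `π_r - π_t` into a factor `A_{rk} conj A_{tk}` on the `k`-th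
column monomial, so `g_A(γ + π_r - π_t) = (A D_p Aᴴ)_{rt}` with `p` the column monomials of `γ`.
Summed over all pairs `(r, t)` these products give
`∑_{k,l} p_k conj q_l |(Aᴴ B)_{kl}|² = d (∑ p) conj (∑ q)` by unbiasedness, and the diagonal
pairs alone give the same value by unimodularity.
-/

open ComplexConjugate

section OffDiag

variable {ι M : Type*} [DecidableEq ι] [AddCommGroup M]

theorem Finset.sum_sum_ite_ne_eq_sum_offDiag (s : Finset ι) (f : ι → ι → M) :
    ∑ a ∈ s, ∑ b ∈ s, (if a ≠ b then f a b else 0) = ∑ x ∈ s.offDiag, f x.1 x.2 := by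
  rw [← sum_product' (f := fun a b => if a ≠ b then f a b else 0), ← sum_filter]
  congr 1
  ext x
  simp [and_assoc]

theorem Finset.sum_offDiag_eq_sum_sum_sub_sum (s : Finset ι) (f : ι → ι → M) :
    ∑ x ∈ s.offDiag, f x.1 x.2 = ∑ a ∈ s, ∑ b ∈ s, f a b - ∑ a ∈ s, f a a := by
  rw [← sum_product', ← diag_union_offDiag, sum_union (disjoint_diag_offDiag s), sum_diag,
    add_sub_cancel_left]

end OffDiag

theorem Complex.norm_sum_sq_sub_sum_norm_sq {J : Type*} [Fintype J] [DecidableEq J] (x : J → ℂ) :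
    ‖∑ j, x j‖ ^ 2 - ∑ j, ‖x j‖ ^ 2 = (∑ p ∈ univ.offDiag, x p.1 * conj (x p.2)).re := by
  have h : ∀ z : ℂ, ‖z‖ ^ 2 = (z * conj z).re := fun z => by rw [mul_conj']; norm_cast
  rw [sum_offDiag_eq_sum_sum_sub_sum univ fun a b => x a * conj (x b), sub_re, re_sum, h, map_sum,
    sum_mul_sum, re_sum]
  simp_rw [h, re_sum]

theorem Complex.mul_conj_eq_one_of_norm_eq_one {z : ℂ} (hz : ‖z‖ = 1) : z * conj z = 1 := by
  rw [mul_conj', hz]; norm_num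

variable {ι κ : Type*} [Fintype ι] [Fintype κ]

noncomputable def columnMonomialSum (A : Matrix ι κ ℂ) (γ : ι → ℤ) : ℂ :=
  ∑ k, ∏ i, A i k ^ γ i

theorem columnMonomialSum_submatrix (A : Matrix ι κ ℂ) (σ : Equiv.Perm ι) (γ : ι → ℤ) :
    columnMonomialSum (A.submatrix σ.symm id) γ = ∑ k, ∏ i, A i k ^ γ (σ i) := by
  refine sum_congr rfl fun k _ => ?_
  rw [← Equiv.prod_comp σ]
  simp

theorem sum_sum_weighted_mul_conj (A B : Matrix ι κ ℂ) (p q : κ → ℂ) :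
    ∑ a, ∑ b, (∑ k, p k * (A a k * conj (A b k))) * conj (∑ l, q l * (B a l * conj (B b l)))
      = ∑ k, ∑ l, p k * conj (q l) * ‖∑ i, conj (A i k) * B i l‖ ^ 2 := by
  have lhs : ∀ a b, (∑ k, p k * (A a k * conj (A b k))) * conj (∑ l, q l * (B a l * conj (B b l)))
      = ∑ k, ∑ l, p k * conj (q l) * ((A a k * conj (B a l)) * (conj (A b k) * B b l)) := by
    intro a b
    rw [map_sum, sum_mul_sum]
    refine sum_congr rfl fun k _ => sum_congr rfl fun l _ => ?_
    simp only [map_mul, Complex.conj_conj]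
    ring
  have rhs : ∀ k l, p k * conj (q l) * ‖∑ i, conj (A i k) * B i l‖ ^ 2
      = ∑ a, ∑ b, p k * conj (q l) * ((A a k * conj (B a l)) * (conj (A b k) * B b l)) := by
    intro k l
    rw [← Complex.conj_mul', map_sum, sum_mul_sum, mul_sum]
    simp only [mul_sum, map_mul, Complex.conj_conj]
  simp only [lhs, rhs, ← Fintype.sum_prod_type' (α₁ := ι) (α₂ := ι),
    ← Fintype.sum_prod_type' (α₁ := κ) (α₂ := κ)]
  exact sum_comm

variable [DecidableEq ι]

theorem prod_zpow_add_single_sub_single {K : Type*} [CommGroupWithZero K]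
    (v : ι → K) (hv : ∀ i, v i ≠ 0) (γ : ι → ℤ) (a b : ι) :
    ∏ i, v i ^ (γ + Pi.single a 1 - Pi.single b 1 : ι → ℤ) i =
      (∏ i, v i ^ γ i) * (v a * (v b)⁻¹) := by
  have single : ∀ c, ∏ i, v i ^ (Pi.single c 1 : ι → ℤ) i = v c := fun c => by
    rw [Fintype.prod_eq_single c fun i hi => by simp [hi]]
    simp
  simp only [Pi.add_apply, Pi.sub_apply, zpow_sub₀ (hv _), zpow_add₀ (hv _), div_eq_mul_inv,
    prod_mul_distrib, prod_inv_distrib, single, mul_assoc]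

theorem sum_offDiag_weighted_mul_conj_eq_zero (A B : Matrix ι κ ℂ)
    (hA : ∀ i k, ‖A i k‖ = 1) (hB : ∀ i k, ‖B i k‖ = 1)
    (hAB : ∀ k l, ‖∑ i, conj (A i k) * B i l‖ ^ 2 = Fintype.card ι) (p q : κ → ℂ) :
    ∑ x ∈ univ.offDiag, (∑ k, p k * (A x.1 k * conj (A x.2 k))) *
      conj (∑ l, q l * (B x.1 l * conj (B x.2 l))) = 0 := by
  have hAB' : ∀ k l, (‖∑ i, conj (A i k) * B i l‖ : ℂ) ^ 2 = Fintype.card ι := fun k l => by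
    exact_mod_cast hAB k l
  rw [sum_offDiag_eq_sum_sum_sub_sum univ fun a b => (∑ k, p k * (A a k * conj (A b k))) *
      conj (∑ l, q l * (B a l * conj (B b l))), sum_sum_weighted_mul_conj, sub_eq_zero]
  simp only [hAB', Complex.mul_conj_eq_one_of_norm_eq_one (hA _ _),
    Complex.mul_conj_eq_one_of_norm_eq_one (hB _ _), mul_one, sum_const, card_univ, nsmul_eq_mul,
    ← sum_mul, ← mul_sum, ← map_sum]
  ring

theorem columnMonomialSum_add_single_sub_single (A : Matrix ι κ ℂ) (hA : ∀ i k, ‖A i k‖ = 1)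
    (γ : ι → ℤ) (a b : ι) :
    columnMonomialSum A (γ + Pi.single a 1 - Pi.single b 1) =
      ∑ k, (∏ i, A i k ^ γ i) * (A a k * conj (A b k)) := by
  refine sum_congr rfl fun k _ => ?_
  rw [prod_zpow_add_single_sub_single _ (fun i => norm_ne_zero_iff.mp (by simp [hA])),
    Complex.inv_eq_conj (hA b k)]

theorem sum_offDiag_columnMonomialSum_mul_conj_eq_zero (A B : Matrix ι κ ℂ)
    (hA : ∀ i k, ‖A i k‖ = 1) (hB : ∀ i k, ‖B i k‖ = 1)
    (hAB : ∀ k l, ‖∑ i, conj (A i k) * B i l‖ ^ 2 = Fintype.card ι) (γ : ι → ℤ) :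
    ∑ x ∈ univ.offDiag, columnMonomialSum A (γ + Pi.single x.1 1 - Pi.single x.2 1) *
      conj (columnMonomialSum B (γ + Pi.single x.1 1 - Pi.single x.2 1)) = 0 := by
  simp only [columnMonomialSum_add_single_sub_single _ hA,
    columnMonomialSum_add_single_sub_single _ hB]
  exact sum_offDiag_weighted_mul_conj_eq_zero A B hA hB hAB _ _

theorem sum_offDiag_norm_sum_sq_sub_sum_norm_sq_eq_zero {J : Type*} [Fintype J] [DecidableEq J]
    (H : J → Matrix ι κ ℂ) (hmod : ∀ j i k, ‖H j i k‖ = 1)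
    (hunb : ∀ j j', j ≠ j' → ∀ k l, ‖∑ i, conj (H j i k) * H j' i l‖ ^ 2 = Fintype.card ι)
    (γ : ι → ℤ) :
    ∑ x ∈ univ.offDiag,
      (‖∑ j, columnMonomialSum (H j) (γ + Pi.single x.1 1 - Pi.single x.2 1)‖ ^ 2 -
        ∑ j, ‖columnMonomialSum (H j) (γ + Pi.single x.1 1 - Pi.single x.2 1)‖ ^ 2) = 0 := by
  simp only [Complex.norm_sum_sq_sub_sum_norm_sq, ← Complex.re_sum]
  rw [sum_comm]
  refine (congrArg Complex.re (sum_eq_zero fun y hy => ?_)).trans Complex.zero_re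
  exact sum_offDiag_columnMonomialSum_mul_conj_eq_zero _ _ (hmod y.1) (hmod y.2)
    (hunb y.1 y.2 (mem_offDiag.mp hy).2.2) γ

theorem bigF_sub_bigG (d : ℕ) (Hs : Fin d → Matrix (Fin d) (Fin d) ℂ) (γ : Fin d → ℤ) :
    bigF d Hs γ - bigG d Hs γ = (1 / (Nat.factorial d : ℝ)) * ∑ σ : Equiv.Perm (Fin d),
      (‖∑ j, columnMonomialSum ((Hs j).submatrix σ.symm id) γ‖ ^ 2 -
        ∑ j, ‖columnMonomialSum ((Hs j).submatrix σ.symm id) γ‖ ^ 2) := by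
  simp only [bigF, bigG, columnMonomialSum_submatrix, sum_sub_distrib, mul_sub]

theorem mub_F_sub_G_shift_sum_eq_zero_general (d : ℕ) (Hs : Fin d → Matrix (Fin d) (Fin d) ℂ)
    (hmod : ∀ j i k, ‖(Hs j) i k‖ = 1)
    (hunb : ∀ j j', j ≠ j' → ∀ k l : Fin d,
      ‖∑ i : Fin d, (starRingEnd ℂ) ((Hs j) i k) * (Hs j') i l‖ ^ 2 = d)
    (γ : Fin d → ℤ) :
    (∑ r : Fin d, ∑ t : Fin d,
        if r ≠ t then bigF d Hs (γ + Pi.single r 1 - Pi.single t 1) else 0) -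
    (∑ r : Fin d, ∑ t : Fin d,
        if r ≠ t then bigG d Hs (γ + Pi.single r 1 - Pi.single t 1) else 0) = 0 := by
  simp only [sum_sum_ite_ne_eq_sum_offDiag, ← sum_sub_distrib, bigF_sub_bigG, ← mul_sum]
  rw [sum_comm, sum_eq_zero fun σ _ => ?_, mul_zero]
  refine sum_offDiag_norm_sum_sq_sub_sum_norm_sq_eq_zero _ (fun j i k => hmod j _ _)
    (fun j j' h k l => ?_) γ
  rw [Fintype.card_fin, ← hunb j j' h k l]
  exact congrArg (‖·‖ ^ 2) (Equiv.sum_comp σ.symm fun i => conj (Hs j i k) * Hs j' i l)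

/-- For pairwise unbiased d×d complex Hadamard matrices H₁,…,H_d and any γ ∈ ℤ^d,
Σ_{r≠t} F(γ + π_r − π_t) − Σ_{r≠t} G(γ + π_r − π_t) = 0. -/
theorem mub_F_sub_G_shift_sum_eq_zero (d : ℕ) (Hs : Fin d → Matrix (Fin d) (Fin d) ℂ)
    (hmod : ∀ j i k, ‖(Hs j) i k‖ = 1)
    (hH : ∀ j, (Hs j) * (Hs j).conjTranspose = (d : ℂ) • (1 : Matrix (Fin d) (Fin d) ℂ))
    (hunb : ∀ j j', j ≠ j' → ∀ k l : Fin d,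
      ‖∑ i : Fin d, (starRingEnd ℂ) ((Hs j) i k) * (Hs j') i l‖ ^ 2 = d)
    (γ : Fin d → ℤ) :
    (∑ r : Fin d, ∑ t : Fin d,
        if r ≠ t then bigF d Hs (γ + Pi.single r 1 - Pi.single t 1) else 0) -
    (∑ r : Fin d, ∑ t : Fin d,
        if r ≠ t then bigG d Hs (γ + Pi.single r 1 - Pi.single t 1) else 0) = 0 :=
  mub_F_sub_G_shift_sum_eq_zero_general d Hs hmod hunb γ
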